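/- arXiv:2603.29053 — 3 statements merged into one kernel-verified Lean document; each statement's English description precedes it below -/
import Mathlib

section
/- Let 𝒜 be an abelian category and Z a stability function on 𝒜 with the Harder–Narasimhan property. Let X be a nonzero object of 𝒜 that is not semistable, with Harder–Narasimhan filtration 0 = X₀ ⊂ X₁ ⊂ … ⊂ Xₙ = X (so n ≥ 2); set D := Xₙ₋₁ and let Q := X/Xₙ₋₁ be the minimal destabilizing quotient of X (Q is semistable and its slope is strictly smaller than the slope of every other HN factor of X). Let X′ be an object of 𝒜 fitting into a short exact sequence 0 → Q → X′ → D → 0. If HNP(X′) = HNP(X), then this short exact sequence splits, i.e. X′ ≅ Q ⊕ D. -/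
/-! For real `s` the linear form `φₛ z = -re z - s·im z` satisfies `0 ≤ φₛ (Z E) ↔ s ≤ μ(E)`.
Take `s` strictly between `μ(Q)` and the slope of the HN factor preceding `Q`. Subobjects of
the semistable `Q` have `φₛ ∘ Z ≤ 0`, and dévissage along the HN filtration bounds `φₛ ∘ Z`
on subobjects of `D` by `φₛ(Z D)`; splitting a subobject `G ⊆ X'` along `G → X' → D` into
kernel and image then gives `φₛ(Z G) ≤ φₛ(Z D)`. As `Z D ∈ HNP(X) = HNP(X')` is a convex
combination of such values `Z G`, some `G` attains the bound for two distinct `s`. Two such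
forms determine a complex number, so `Z` vanishes on the kernel and cokernel of `G → D`:
that map is an isomorphism and its inverse is a section of `X' → D`. -/

open CategoryTheory CategoryTheory.Limits

universe v u

namespace StabNL

variable {𝒜 : Type u} [Category.{v} 𝒜] [Abelian 𝒜]

noncomputable def muSlope (Z : 𝒜 → ℂ) (E : 𝒜) : EReal :=
  if (Z E).im = 0 then ⊤ else ((-(Z E).re / (Z E).im : ℝ) : EReal)

structure IsStabilityFunction (Z : 𝒜 → ℂ) : Prop where
  map_zero : ∀ E : 𝒜, IsZero E → Z E = 0
  additive : ∀ S : ShortComplex 𝒜, S.ShortExact → Z S.X₂ = Z S.X₁ + Z S.X₃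
  im_nonneg : ∀ E : 𝒜, ¬ IsZero E → 0 ≤ (Z E).im
  re_neg_of_im_zero : ∀ E : 𝒜, ¬ IsZero E → (Z E).im = 0 → (Z E).re < 0

def Semistable (Z : 𝒜 → ℂ) (E : 𝒜) : Prop :=
  ¬ IsZero E ∧ ∀ F : Subobject E, ¬ IsZero (F : 𝒜) → muSlope Z (F : 𝒜) ≤ muSlope Z E

structure HNFiltration (Z : 𝒜 → ℂ) (E : 𝒜) where
  n : ℕ
  npos : 0 < n
  obj : Fin (n + 1) → 𝒜
  zero : IsZero (obj 0)
  top : obj (Fin.last n) ≅ E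
  f : ∀ i : Fin n, obj i.castSucc ⟶ obj i.succ
  mono : ∀ i : Fin n, Mono (f i)
  semistable_factor : ∀ i : Fin n, Semistable Z (cokernel (f i))
  slope_strict_anti : ∀ i j : Fin n, i < j →
    muSlope Z (cokernel (f j)) < muSlope Z (cokernel (f i))

noncomputable def HNP (Z : 𝒜 → ℂ) (E : 𝒜) : Set ℂ :=
  convexHull ℝ {z : ℂ | ∃ F : Subobject E, muSlope Z E < muSlope Z (F : 𝒜) ∧ z = Z (F : 𝒜)}

noncomputable def slopeForm (s : ℝ) : ℂ →ₗ[ℝ] ℝ := -Complex.reLm - s • Complex.imLm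

lemma slopeForm_apply (s : ℝ) (z : ℂ) : slopeForm s z = -z.re - s * z.im := by
  simp [slopeForm]

lemma eq_zero_of_slopeForm_eq_zero {s₁ s₂ : ℝ} (hs : s₁ ≠ s₂) {z : ℂ}
    (h₁ : slopeForm s₁ z = 0) (h₂ : slopeForm s₂ z = 0) : z = 0 := by
  rw [slopeForm_apply] at h₁ h₂
  have him : z.im = 0 := by
    have : (s₂ - s₁) * z.im = 0 := by linarith
    exact (mul_eq_zero.1 this).resolve_left (sub_ne_zero.2 hs.symm)
  exact Complex.ext (by rw [him] at h₁; simpa using h₁) him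

theorem exists_mem_eq_of_mem_convexHull {E : Type*} [AddCommGroup E] [Module ℝ E]
    (ℓ : E →ₗ[ℝ] ℝ) {S : Set E} {w : E} (hw : w ∈ convexHull ℝ S)
    (hS : ∀ z ∈ S, ℓ z ≤ ℓ w) : ∃ z ∈ S, ℓ z = ℓ w := by
  by_contra! h
  have hsub : S ⊆ {z | ℓ z < ℓ w} := fun z hz => (hS z hz).lt_of_ne (h z hz)
  exact lt_irrefl (ℓ w) (convexHull_min hsub (convex_halfSpace_lt ℓ.isLinear _) hw)

lemma shortExact_cokernel {A B : 𝒜} (u : A ⟶ B) [Mono u] :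
    (ShortComplex.mk u (cokernel.π u) (cokernel.condition u)).ShortExact :=
  ⟨ShortComplex.exact_of_g_is_cokernel _ (cokernelIsCokernel u)⟩

lemma exists_mono_kernel_comp {S : ShortComplex 𝒜} (hS : S.ShortExact) {G : 𝒜}
    (g : G ⟶ S.X₂) [Mono g] : ∃ k : kernel (g ≫ S.g) ⟶ S.X₁, Mono k := by
  have := hS.mono_f
  let k := hS.exact.lift (kernel.ι (g ≫ S.g) ≫ g) (by simp)
  have : Mono (k ≫ S.f) := by rw [hS.exact.lift_f]; infer_instance
  exact ⟨k, mono_of_mono k S.f⟩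

omit [Abelian 𝒜] in
lemma exists_subobject_of_mem_HNP {Z : 𝒜 → ℂ} {E : 𝒜} {w : ℂ} (hw : w ∈ HNP Z E)
    (ℓ : ℂ →ₗ[ℝ] ℝ) (h : ∀ G : Subobject E, ℓ (Z G) ≤ ℓ w) :
    ∃ G : Subobject E, ℓ (Z G) = ℓ w := by
  obtain ⟨_, ⟨G, -, rfl⟩, hG⟩ :=
    exists_mem_eq_of_mem_convexHull ℓ hw (by rintro _ ⟨G, -, rfl⟩; exact h G)
  exact ⟨G, hG⟩

def SlopeFormBounded (Z : 𝒜 → ℂ) (s : ℝ) (E : 𝒜) (c : ℝ) : Prop :=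
  ∀ ⦃G : 𝒜⦄ (g : G ⟶ E), Mono g → slopeForm s (Z G) ≤ c

lemma HNFiltration.exists_slope_gap {Z : 𝒜 → ℂ} {X : 𝒜} (F : HNFiltration Z X)
    (i : Fin F.n) (hi : 0 < (i : ℕ)) :
    ∃ s₁ s₂ : ℝ, s₁ < s₂ ∧ ∀ s ∈ ({s₁, s₂} : Set ℝ), muSlope Z (cokernel (F.f i)) < s ∧
      ∀ k < i, (s : EReal) ≤ muSlope Z (cokernel (F.f k)) := by
  let j : Fin F.n := ⟨i - 1, by omega⟩
  obtain ⟨s₁, hQ, h₁⟩ := EReal.lt_iff_exists_real_btwn.1 (F.slope_strict_anti j i (by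
    rw [Fin.lt_def]; simp only [j]; omega))
  obtain ⟨s₂, h₁₂, h₂⟩ := EReal.lt_iff_exists_real_btwn.1 h₁
  refine ⟨s₁, s₂, EReal.coe_lt_coe_iff.1 h₁₂, fun s hs => ?_⟩
  have hs' : muSlope Z (cokernel (F.f i)) < s ∧
      (s : EReal) < muSlope Z (cokernel (F.f j)) := by
    rcases hs with rfl | rfl
    exacts [⟨hQ, h₁⟩, ⟨hQ.trans h₁₂, h₂⟩]
  refine ⟨hs'.1, fun k hk => hs'.2.le.trans ?_⟩
  rcases (show k ≤ j by rw [Fin.le_def]; rw [Fin.lt_def] at hk; simp only [j]; omega).eq_or_lt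
    with rfl | hkj
  exacts [le_rfl, (F.slope_strict_anti k j hkj).le]

section Stability

variable {Z : 𝒜 → ℂ} (hZ : IsStabilityFunction Z)
include hZ

lemma Z_eq_add_cokernel {A B : 𝒜} (u : A ⟶ B) [Mono u] : Z B = Z A + Z (cokernel u) :=
  hZ.additive _ (shortExact_cokernel u)

lemma Z_eq_kernel_add_coimage {G Y : 𝒜} (ψ : G ⟶ Y) :
    Z G = Z (kernel ψ) + Z (Abelian.coimage ψ) :=
  Z_eq_add_cokernel hZ (kernel.ι ψ)

lemma Z_eq_of_iso {A B : 𝒜} (e : A ≅ B) : Z A = Z B := by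
  rw [Z_eq_add_cokernel hZ e.hom, hZ.map_zero _ ((isZero_zero 𝒜).of_iso (cokernel.ofEpi e.hom)),
    add_zero]

lemma muSlope_eq_of_iso {A B : 𝒜} (e : A ≅ B) : muSlope Z A = muSlope Z B := by
  simp only [muSlope, Z_eq_of_iso hZ e]

lemma isZero_of_Z_eq_zero {E : 𝒜} (h : Z E = 0) : IsZero E := by
  by_contra hE
  simpa [h] using hZ.re_neg_of_im_zero E hE (by simp [h])

lemma im_Z_nonneg (E : 𝒜) : 0 ≤ (Z E).im := by
  by_cases hE : IsZero E
  · simp [hZ.map_zero E hE]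
  · exact hZ.im_nonneg E hE

lemma re_Z_nonpos_of_im_eq_zero {E : 𝒜} (h : (Z E).im = 0) : (Z E).re ≤ 0 := by
  by_cases hE : IsZero E
  · simp [hZ.map_zero E hE]
  · exact (hZ.re_neg_of_im_zero E hE h).le

lemma le_muSlope_iff (s : ℝ) (E : 𝒜) :
    (s : EReal) ≤ muSlope Z E ↔ 0 ≤ slopeForm s (Z E) := by
  rw [slopeForm_apply, muSlope]
  split_ifs with h
  · simp only [le_top, true_iff, h, mul_zero, sub_zero]
    linarith [re_Z_nonpos_of_im_eq_zero hZ h]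
  · have him : 0 < (Z E).im := (im_Z_nonneg hZ E).lt_of_ne' h
    rw [EReal.coe_le_coe_iff, le_div_iff₀ him, sub_nonneg]

lemma slopeForm_nonpos_of_muSlope_le {s : ℝ} {E : 𝒜} (h : muSlope Z E ≤ s) :
    slopeForm s (Z E) ≤ 0 := by
  rw [muSlope] at h
  split_ifs at h with him
  · exact absurd (top_le_iff.1 h) (EReal.coe_ne_top s)
  · have him : 0 < (Z E).im := (im_Z_nonneg hZ E).lt_of_ne' him
    rw [EReal.coe_le_coe_iff, div_le_iff₀ him] at h
    rw [slopeForm_apply]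
    linarith

lemma muSlope_le_of_shortExact {S : ShortComplex 𝒜} (hS : S.ShortExact)
    (h : muSlope Z S.X₁ ≤ muSlope Z S.X₂) : muSlope Z S.X₂ ≤ muSlope Z S.X₃ := by
  have hadd := hZ.additive S hS
  by_cases him : (Z S.X₂).im = 0
  · have him₃ : (Z S.X₃).im = 0 := by
      have := congrArg Complex.im hadd
      simp only [Complex.add_im] at this
      linarith [im_Z_nonneg hZ S.X₁, im_Z_nonneg hZ S.X₃]
    simp [muSlope, him₃]
  · set t : ℝ := -(Z S.X₂).re / (Z S.X₂).im
    have ht : muSlope Z S.X₂ = t := if_neg him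
    have h₂ : slopeForm t (Z S.X₂) = 0 := by
      rw [slopeForm_apply, div_mul_cancel₀ _ him]
      ring
    have h₁ := slopeForm_nonpos_of_muSlope_le hZ (h.trans ht.le)
    rw [ht, le_muSlope_iff hZ]
    rw [hadd, map_add] at h₂
    linarith

lemma muSlope_lt_of_shortExact {S : ShortComplex 𝒜} (hS : S.ShortExact)
    (h : muSlope Z S.X₃ < muSlope Z S.X₁) : muSlope Z S.X₂ < muSlope Z S.X₁ := by
  by_contra! h'
  exact (h.trans_le (h'.trans (muSlope_le_of_shortExact hZ hS h'))).false

lemma mem_HNP_of_mono {A E : 𝒜} (m : A ⟶ E) [Mono m] (h : muSlope Z E < muSlope Z A) :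
    Z A ∈ HNP Z E := by
  have e := Subobject.underlyingIso m
  refine subset_convexHull ℝ _ ⟨Subobject.mk m, ?_, (Z_eq_of_iso hZ e).symm⟩
  rwa [muSlope_eq_of_iso hZ e]

lemma Semistable.muSlope_le {A E : 𝒜} (hE : Semistable Z E) (m : A ⟶ E) [Mono m]
    (hA : ¬ IsZero A) : muSlope Z A ≤ muSlope Z E := by
  have e := Subobject.underlyingIso m
  rw [← muSlope_eq_of_iso hZ e]
  exact hE.2 (Subobject.mk m) fun h => hA (h.of_iso e.symm)

open ZeroObject in
lemma SlopeFormBounded.nonneg {s c : ℝ} {E : 𝒜} (h : SlopeFormBounded Z s E c) : 0 ≤ c := by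
  simpa [hZ.map_zero _ (isZero_zero 𝒜)] using
    h (0 : 0 ⟶ E) ⟨fun _ _ _ => (isZero_zero 𝒜).eq_of_tgt _ _⟩

lemma slopeFormBounded_of_isZero {s : ℝ} {E : 𝒜} (hE : IsZero E) : SlopeFormBounded Z s E 0 :=
  fun G g _ => by rw [hZ.map_zero G (hE.of_mono g), map_zero]

lemma Semistable.slopeFormBounded {s : ℝ} {A : 𝒜} (hA : Semistable Z A)
    (hs : (s : EReal) ≤ muSlope Z A) : SlopeFormBounded Z s A (slopeForm s (Z A)) := by
  intro G g _
  by_cases hG : IsZero G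
  · rw [hZ.map_zero G hG, map_zero]
    exact (le_muSlope_iff hZ s A).1 hs
  · have hC := muSlope_le_of_shortExact hZ (shortExact_cokernel g) (hA.muSlope_le hZ g hG)
    have hC' := (le_muSlope_iff hZ s _).1 (hs.trans hC)
    rw [Z_eq_add_cokernel hZ g, map_add]
    linarith

lemma Semistable.slopeFormBounded_zero {s : ℝ} {A : 𝒜} (hA : Semistable Z A)
    (hs : muSlope Z A ≤ s) : SlopeFormBounded Z s A 0 := by
  intro G g _
  by_cases hG : IsZero G
  · rw [hZ.map_zero G hG, map_zero]
  · exact slopeForm_nonpos_of_muSlope_le hZ ((hA.muSlope_le hZ g hG).trans hs)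

lemma SlopeFormBounded.of_shortExact {S : ShortComplex 𝒜} (hS : S.ShortExact) {s c₁ c₃ : ℝ}
    (h₁ : SlopeFormBounded Z s S.X₁ c₁) (h₃ : SlopeFormBounded Z s S.X₃ c₃) :
    SlopeFormBounded Z s S.X₂ (c₁ + c₃) := by
  intro G g _
  obtain ⟨k, _⟩ := exists_mono_kernel_comp hS g
  rw [Z_eq_kernel_add_coimage hZ (g ≫ S.g), map_add]
  exact add_le_add (h₁ k inferInstance) (h₃ (Abelian.factorThruCoimage _) inferInstance)

lemma HNFiltration.slopeFormBounded {X : 𝒜} (F : HNFiltration Z X) (s : ℝ) (j : Fin (F.n + 1))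
    (hs : ∀ k : Fin F.n, k.castSucc < j → (s : EReal) ≤ muSlope Z (cokernel (F.f k))) :
    SlopeFormBounded Z s (F.obj j) (slopeForm s (Z (F.obj j))) := by
  induction j using Fin.induction with
  | zero =>
    rw [hZ.map_zero _ F.zero, map_zero]
    exact slopeFormBounded_of_isZero hZ F.zero
  | succ k ih =>
    have := F.mono k
    have hk := (ih fun k' hk' => hs k' (hk'.trans k.castSucc_lt_succ)).of_shortExact hZ
      (shortExact_cokernel (F.f k))
      ((F.semistable_factor k).slopeFormBounded hZ (hs k k.castSucc_lt_succ))
    rwa [← map_add, ← Z_eq_add_cokernel hZ] at hk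

lemma isIso_comp_g_of_slopeForm_add_eq {S : ShortComplex 𝒜} (hS : S.ShortExact) {s₁ s₂ : ℝ}
    (hs : s₁ ≠ s₂) (h₁ : ∀ s ∈ ({s₁, s₂} : Set ℝ), SlopeFormBounded Z s S.X₁ 0)
    (h₃ : ∀ s ∈ ({s₁, s₂} : Set ℝ),
      SlopeFormBounded Z s S.X₃ (slopeForm s (Z S.X₃)))
    {G : 𝒜} (g : G ⟶ S.X₂) [Mono g] (hG : slopeForm s₁ (Z G) + slopeForm s₂ (Z G) =
      slopeForm s₁ (Z S.X₃) + slopeForm s₂ (Z S.X₃)) :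
    IsIso (g ≫ S.g) := by
  obtain ⟨k, _⟩ := exists_mono_kernel_comp hS g
  have hdecomp := Z_eq_kernel_add_coimage hZ (g ≫ S.g)
  have hK₁ := h₁ s₁ (by simp) k inferInstance
  have hK₂ := h₁ s₂ (by simp) k inferInstance
  have hI₁ := h₃ s₁ (by simp) (Abelian.factorThruCoimage (g ≫ S.g)) inferInstance
  have hI₂ := h₃ s₂ (by simp) (Abelian.factorThruCoimage (g ≫ S.g)) inferInstance
  rw [hdecomp, map_add, map_add] at hG
  have hK : Z (kernel (g ≫ S.g)) = 0 :=
    eq_zero_of_slopeForm_eq_zero hs (by linarith) (by linarith)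
  have hI : Z S.X₃ - Z (Abelian.coimage (g ≫ S.g)) = 0 :=
    eq_zero_of_slopeForm_eq_zero hs (by rw [map_sub]; linarith) (by rw [map_sub]; linarith)
  have := Preadditive.mono_of_isZero_kernel _ (isZero_of_Z_eq_zero hZ hK)
  have hC : Z (cokernel (g ≫ S.g)) = 0 := by
    linear_combination -Z_eq_add_cokernel hZ (g ≫ S.g) - hdecomp - hK + hI
  have := Preadditive.epi_of_isZero_cokernel _ (isZero_of_Z_eq_zero hZ hC)
  exact isIso_of_mono_of_epi _

end Stability

theorem statement1_general
    (Z : 𝒜 → ℂ) (hZ : IsStabilityFunction Z)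
    (X : 𝒜)
    (F : HNFiltration Z X) (hn : 2 ≤ F.n)
    (i : Fin F.n) (hi : (i : ℕ) = F.n - 1)
    (X' : 𝒜) (q : cokernel (F.f i) ⟶ X') (p : X' ⟶ F.obj i.castSucc)
    (w : q ≫ p = 0) (hse : (ShortComplex.mk q p w).ShortExact)
    (hpolygon : HNP Z X' = HNP Z X) :
    Nonempty (ShortComplex.mk q p w).Splitting ∧
      Nonempty (X' ≅ cokernel (F.f i) ⊞ F.obj i.castSucc) := by
  obtain ⟨s₁, s₂, hs, hgap⟩ := F.exists_slope_gap i (by omega)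
  have hQ (s) (hmem : s ∈ ({s₁, s₂} : Set ℝ)) : SlopeFormBounded Z s (cokernel (F.f i)) 0 :=
    (F.semistable_factor i).slopeFormBounded_zero hZ (hgap s hmem).1.le
  have hD (s) (hmem : s ∈ ({s₁, s₂} : Set ℝ)) : SlopeFormBounded Z s (F.obj i.castSucc)
      (slopeForm s (Z (F.obj i.castSucc))) :=
    F.slopeFormBounded hZ s _ fun k hk => (hgap s hmem).2 k (Fin.castSucc_lt_castSucc_iff.1 hk)
  have hX' (s) (hmem : s ∈ ({s₁, s₂} : Set ℝ)) : SlopeFormBounded Z s X'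
      (slopeForm s (Z (F.obj i.castSucc))) := by
    simpa only [zero_add] using (hQ s hmem).of_shortExact hZ hse (hD s hmem)
  have hμD : muSlope Z (cokernel (F.f i)) < muSlope Z (F.obj i.castSucc) :=
    (hgap s₁ (by simp)).1.trans_le ((le_muSlope_iff hZ _ _).2 ((hD s₁ (by simp)).nonneg hZ))
  have := F.mono i
  have hlast : i.succ = Fin.last F.n := Fin.ext (by simp only [Fin.val_succ, Fin.val_last]; omega)
  let e : F.obj i.succ ≅ X := eqToIso (congrArg F.obj hlast) ≪≫ F.top
  have hDX : Z (F.obj i.castSucc) ∈ HNP Z X' := hpolygon ▸ mem_HNP_of_mono hZ (F.f i ≫ e.hom)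
    (muSlope_eq_of_iso hZ e ▸ muSlope_lt_of_shortExact hZ (shortExact_cokernel (F.f i)) hμD)
  obtain ⟨G, hG⟩ := exists_subobject_of_mem_HNP hDX (slopeForm s₁ + slopeForm s₂) fun G =>
    add_le_add (hX' s₁ (by simp) G.arrow inferInstance) (hX' s₂ (by simp) G.arrow inferInstance)
  have := isIso_comp_g_of_slopeForm_add_eq hZ hse hs.ne hQ hD G.arrow hG
  let σ := ShortComplex.Splitting.ofExactOfSection _ hse.exact (inv (G.arrow ≫ p) ≫ G.arrow)
    (by simp) hse.mono_f
  exact ⟨⟨σ⟩, ⟨σ.isoBinaryBiproduct⟩⟩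

/-- If the short exact sequence `0 → Q → X' → D → 0` (with `Q` the minimal destabilizing
quotient of `X` and `D = Xₙ₋₁`) satisfies `HNP(X') = HNP(X)`, then it splits,
i.e. `X' ≅ Q ⊕ D`. -/
theorem statement1
    (Z : 𝒜 → ℂ) (hZ : IsStabilityFunction Z)
    (hHN : ∀ E : 𝒜, ¬ IsZero E → Nonempty (HNFiltration Z E))
    (X : 𝒜) (hX : ¬ IsZero X) (hXns : ¬ Semistable Z X)
    (F : HNFiltration Z X) (hn : 2 ≤ F.n)
    (i : Fin F.n) (hi : (i : ℕ) = F.n - 1)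
    (X' : 𝒜) (q : cokernel (F.f i) ⟶ X') (p : X' ⟶ F.obj i.castSucc)
    (w : q ≫ p = 0) (hse : (ShortComplex.mk q p w).ShortExact)
    (hpolygon : HNP Z X' = HNP Z X) :
    Nonempty (ShortComplex.mk q p w).Splitting ∧
      Nonempty (X' ≅ cokernel (F.f i) ⊞ F.obj i.castSucc) :=
  statement1_general Z hZ X F hn i hi X' q p w hse hpolygon

end StabNL
end

section
/- Let F : 𝒜 → ℬ be an exact functor between abelian categories. Assume: (i) every object of ℬ is noetherian; (ii) every object X of 𝒜 with F(X) ≅ 0 is a noetherian object of 𝒜; (iii) every object E of 𝒜 has a largest subobject killed by F, i.e. a subobject T₀ ⊆ E with F(T₀) ≅ 0 such that every subobject S ⊆ E with F(S) ≅ 0 satisfies S ⊆ T₀. Then every object of 𝒜 is noetherian. -/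
open CategoryTheory CategoryTheory.Limits

universe v₁ v₂ u₁ u₂

/-!
Subobjects `A ↦ F(A)` give a monotone map from `Subobject X` to `Subobject (F X)`, which satisfies
the ascending chain condition; so an ascending chain in `X` eventually stays in the fibre above
some `S`, i.e. among the `A ≥ S` with `F(A) ≤ F(S)`. Such an `A` is determined by its image `A / S`
in `X / S`, which exactness of `F` shows to be killed by `F`; hence `A / S` lies in the largest
subobject of `X / S` killed by `F`, a noetherian object, and the chain stabilises.
-/

theorem OrderHom.wellFoundedGT_of_wellFoundedGT_fibers {α β : Type*} [PartialOrder α]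
    [PartialOrder β] [WellFoundedGT β] (φ : α →o β)
    (hφ : ∀ a, WellFoundedGT {b // a ≤ b ∧ φ b ≤ φ a}) : WellFoundedGT α := by
  rw [wellFoundedGT_iff_monotone_chain_condition]
  intro f
  obtain ⟨N, hN⟩ := wellFoundedGT_iff_monotone_chain_condition.1 ‹_› (φ.comp f)
  let g : ℕ →o {b // f N ≤ b ∧ φ b ≤ φ (f N)} :=
    ⟨fun n => ⟨f (N + n), f.monotone (by omega), (hN _ (by omega)).ge⟩,
      fun m n hmn => f.monotone (by omega)⟩
  obtain ⟨M, hM⟩ := wellFoundedGT_iff_monotone_chain_condition.1 (hφ (f N)) g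
  refine ⟨N + M, fun m hm => ?_⟩
  obtain ⟨k, rfl⟩ := Nat.exists_eq_add_of_le (le_trans (Nat.le_add_right N M) hm)
  exact Subtype.ext_iff.1 (hM k (by omega))

namespace CategoryTheory

variable {C : Type u₁} [Category.{v₁} C] {D : Type u₂} [Category.{v₂} D]

noncomputable def Functor.mapSubobject (F : C ⥤ D) [F.PreservesMonomorphisms] (X : C) :
    Subobject X →o Subobject (F.obj X) where
  toFun A := Subobject.mk (F.map A.arrow)
  monotone' A B h := Subobject.mk_le_mk_of_comm (F.map (Subobject.ofLE A B h))
    (by rw [← F.map_comp, Subobject.ofLE_arrow])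

theorem Functor.map_comp_eq_zero_of_mapSubobject_le [HasZeroMorphisms C] [HasZeroMorphisms D]
    (F : C ⥤ D) [F.PreservesMonomorphisms] [F.PreservesZeroMorphisms] {X Y : C}
    {A S : Subobject X} (h : F.mapSubobject X A ≤ F.mapSubobject X S) {g : X ⟶ Y}
    (hg : S.arrow ≫ g = 0) : F.map (A.arrow ≫ g) = 0 := by
  rw [F.map_comp, ← Subobject.ofMkLEMk_comp h, Category.assoc, ← F.map_comp, hg,
    F.map_zero, comp_zero]

theorem Functor.isZero_obj_imageSubobject_of_map_eq_zero [HasZeroMorphisms C] [HasImages C]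
    [HasEqualizers C] [HasZeroMorphisms D] (F : C ⥤ D) [F.PreservesMonomorphisms]
    [F.PreservesEpimorphisms] {X Y : C} {f : X ⟶ Y} (hf : F.map f = 0) :
    IsZero (F.obj (imageSubobject f : C)) := by
  refine IsZero.of_epi_eq_zero (F.map (factorThruImageSubobject f)) ?_
  refine zero_of_comp_mono (F.map (imageSubobject f).arrow) ?_
  rw [← F.map_comp, imageSubobject_arrow_comp, hf]

theorem Abelian.le_of_imageSubobject_comp_cokernel_π_le [Abelian C] {X : C}
    {S A B : Subobject X} (hB : S ≤ B)
    (h : imageSubobject (A.arrow ≫ cokernel.π S.arrow) ≤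
      imageSubobject (B.arrow ≫ cokernel.π S.arrow)) : A ≤ B := by
  let d : cokernel S.arrow ⟶ cokernel B.arrow := cokernel.desc _ (cokernel.π B.arrow)
    (by rw [← Subobject.ofLE_arrow hB, Category.assoc, cokernel.condition, comp_zero])
  have hd : cokernel.π S.arrow ≫ d = cokernel.π B.arrow := cokernel.π_desc _ _ _
  have hB₀ : (imageSubobject (B.arrow ≫ cokernel.π S.arrow)).arrow ≫ d = 0 :=
    imageSubobject_arrow_comp_eq_zero (by rw [Category.assoc, hd, cokernel.condition])
  have hA₀ : A.arrow ≫ cokernel.π B.arrow = 0 := calc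
    A.arrow ≫ cokernel.π B.arrow = (A.arrow ≫ cokernel.π S.arrow) ≫ d := by
      rw [Category.assoc, hd]
    _ = factorThruImageSubobject _ ≫ Subobject.ofLE _ _ h ≫
        (imageSubobject (B.arrow ≫ cokernel.π S.arrow)).arrow ≫ d := by
      rw [Subobject.ofLE_arrow_assoc, imageSubobject_arrow_comp_assoc]
    _ = 0 := by rw [hB₀, comp_zero, comp_zero]
  exact Subobject.le_of_comm (Abelian.monoLift _ _ hA₀) (Abelian.monoLift_comp _ _ _)

theorem Functor.wellFoundedGT_fiber_mapSubobject [Abelian C] [HasZeroMorphisms D] (F : C ⥤ D)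
    [F.PreservesMonomorphisms] [F.PreservesEpimorphisms] [F.PreservesZeroMorphisms] {X : C} (S : Subobject X)
    (T : Subobject (cokernel S.arrow)) [IsNoetherianObject (T : C)]
    (hT : ∀ U : Subobject (cokernel S.arrow), IsZero (F.obj (U : C)) → U ≤ T) :
    WellFoundedGT {A // S ≤ A ∧ F.mapSubobject X A ≤ F.mapSubobject X S} := by
  have : WellFoundedGT (Set.Iic T) :=
    (Subobject.subobjectOrderIso T).symm.toOrderEmbedding.wellFoundedGT
  let quot (A : {A // S ≤ A ∧ F.mapSubobject X A ≤ F.mapSubobject X S}) : Set.Iic T :=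
    ⟨imageSubobject (A.1.arrow ≫ cokernel.π S.arrow),
      hT _ (F.isZero_obj_imageSubobject_of_map_eq_zero
        (F.map_comp_eq_zero_of_mapSubobject_le A.2.2 (cokernel.condition _)))⟩
  refine (OrderEmbedding.ofMapLEIff quot fun A B => ⟨fun h => ?_, fun h => ?_⟩).wellFoundedGT
  · exact Abelian.le_of_imageSubobject_comp_cokernel_π_le B.2.1 h
  · change imageSubobject (A.1.arrow ≫ _) ≤ imageSubobject (B.1.arrow ≫ _)
    rw [← Subobject.ofLE_arrow h, Category.assoc]
    exact imageSubobject_comp_le _ _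

end CategoryTheory

/-- Let `F : 𝒜 ⥤ ℬ` be an exact functor between abelian categories. If every object of `ℬ`
is noetherian, every object of `𝒜` killed by `F` is noetherian, and every object of `𝒜` has
a largest subobject killed by `F`, then every object of `𝒜` is noetherian. -/
theorem statement2
    {𝒜 : Type u₁} [Category.{v₁} 𝒜] [Abelian 𝒜]
    {ℬ : Type u₂} [Category.{v₂} ℬ] [Abelian ℬ]
    (F : 𝒜 ⥤ ℬ) [PreservesFiniteLimits F] [PreservesFiniteColimits F]
    (h₁ : ∀ Y : ℬ, IsNoetherianObject Y)
    (h₂ : ∀ X : 𝒜, IsZero (F.obj X) → IsNoetherianObject X)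
    (h₃ : ∀ E : 𝒜, ∃ T₀ : Subobject E, IsZero (F.obj (T₀ : 𝒜)) ∧
        ∀ S : Subobject E, IsZero (F.obj (S : 𝒜)) → S ≤ T₀) :
    ∀ X : 𝒜, IsNoetherianObject X := by
  intro X
  have := h₁ (F.obj X)
  refine (ObjectProperty.is_iff _ _).2
    ((F.mapSubobject X).wellFoundedGT_of_wellFoundedGT_fibers fun S => ?_)
  obtain ⟨T₀, hT₀, hT₀_max⟩ := h₃ (cokernel S.arrow)
  have := h₂ _ hT₀
  exact F.wellFoundedGT_fiber_mapSubobject S T₀ hT₀_max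
end

section
/- Let C be a discrete valuation ring with uniformizer π, let m ≥ 1 be an integer, and let M be a module over the quotient ring C/(π^m). Then M is flat over C/(π^m) if and only if for every 1 ≤ k ≤ m−1 the map x ↦ π^k·x induces an isomorphism M/πM ≅ π^k M / π^{k+1} M (equivalently, multiplication by π induces isomorphisms M/πM ≅ πM/π²M ≅ … ≅ π^{m−1}M, noting π^m M = 0). -/
/-!
Over `R = C/(π^m)` every ideal is `(π^n)` with `n ≤ m`, and its annihilator is `(π^(m-n))`.
Hence `(π^n) ≅ R/(π^(m-n))`, and `(π^n) ⊗ M → M` becomes `M/π^(m-n)M → M`, `x ↦ π^n x`;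
so `M` is flat iff `ker π^n ⊆ π^(m-n) M` for all `n ≤ m`. This is equivalent to the graded
condition: if `π^k x = π^(k+1) y` then `x - π y ∈ ker π^k ⊆ π^(m-k) M ⊆ π M`; conversely, by
downward induction on `n`, an `x ∈ ker π^n` is `π y` with `y ∈ ker π^(n+1) ⊆ π^(m-n-1) M`.
-/

namespace DVRFlatNL

section

variable (C : Type*) [CommRing C] (π : C) (m : ℕ)
  (M : Type*) [AddCommGroup M] [Module (C ⧸ Ideal.span {π ^ m}) M]

/-- Multiplication by `π^k` on a module over `C/(π^m)`. -/
noncomputable def piSmul (k : ℕ) : M →ₗ[C ⧸ Ideal.span {π ^ m}] M :=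
  LinearMap.lsmul _ M ((Ideal.Quotient.mk (Ideal.span {π ^ m}) π) ^ k)

/-- The submodule `π^k M`. -/
noncomputable def piPow (k : ℕ) : Submodule (C ⧸ Ideal.span {π ^ m}) M :=
  LinearMap.range (piSmul C π m M k)

/-- The map `M → π^k M / π^{k+1} M` induced by `x ↦ π^k • x`. -/
noncomputable def inducedMap (k : ℕ) :
    M →ₗ[C ⧸ Ideal.span {π ^ m}]
      (piPow C π m M k ⧸
        Submodule.comap (piPow C π m M k).subtype (piPow C π m M (k + 1))) :=
  (Submodule.mkQ _).comp (LinearMap.rangeRestrict (piSmul C π m M k))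

end

open TensorProduct LinearMap in
theorem injective_lift_lsmul_comp_span_singleton_iff {R M : Type*} [CommRing R]
    [AddCommGroup M] [Module R M] (a : R) :
    Function.Injective (lift ((lsmul R M).comp (Ideal.span {a}).subtype)) ↔
      ker (lsmul R M a) ≤ Ideal.torsionOf R R a • ⊤ := by
  set I := Ideal.torsionOf R R a
  have hI : I • (⊤ : Submodule R M) ≤ ker (lsmul R M a) := by
    refine Submodule.smul_le.mpr fun r hr x _ => ?_
    rw [mem_ker, lsmul_apply, smul_smul, mul_comm, ← smul_eq_mul,
      (Ideal.mem_torsionOf_iff a r).mp hr, zero_smul]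
  have hcomp : lift ((lsmul R M).comp (Ideal.span {a}).subtype) ∘ₗ
      (Ideal.quotTorsionOfEquivSpanSingleton R R a).rTensor M ∘ₗ
        (quotTensorEquivQuotSMul M I).symm.toLinearMap =
      Submodule.liftQ (I • ⊤) (lsmul R M a) hI := by
    ext x
    simp only [coe_comp, LinearEquiv.coe_coe, Function.comp_apply, Submodule.mkQ_apply,
      quotTensorEquivQuotSMul_symm_mk, Submodule.liftQ_apply, LinearEquiv.rTensor_tmul]
    rw [show (1 : R ⧸ I) = Submodule.Quotient.mk 1 from rfl,
      Ideal.quotTorsionOfEquivSpanSingleton_apply_mk, lift.tmul]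
    simp
  rw [← EquivLike.injective_comp ((quotTensorEquivQuotSMul M I).symm.trans
    ((Ideal.quotTorsionOfEquivSpanSingleton R R a).rTensor M)), ← LinearEquiv.coe_coe,
    LinearEquiv.coe_trans, ← coe_comp, hcomp, ← ker_eq_bot, Submodule.ker_liftQ,
    ← le_ker_iff_map, Submodule.ker_mkQ]

section Basic

variable {C : Type*} [CommRing C] {π : C} {m : ℕ}
  {M : Type*} [AddCommGroup M] [Module (C ⧸ Ideal.span {π ^ m}) M]

local notation "R" => C ⧸ Ideal.span {π ^ m}
local notation "p" => Ideal.Quotient.mk (Ideal.span {π ^ m}) π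

theorem mem_piPow {k : ℕ} {x : M} : x ∈ piPow C π m M k ↔ ∃ y : M, p ^ k • y = x :=
  Iff.rfl

theorem pow_smul_mem_piPow (k : ℕ) (y : M) : p ^ k • y ∈ piPow C π m M k :=
  ⟨y, rfl⟩

theorem piPow_antitone : Antitone (piPow C π m M) := by
  rintro k l hkl _ ⟨y, rfl⟩
  refine ⟨p ^ (l - k) • y, ?_⟩
  change p ^ k • p ^ (l - k) • y = p ^ l • y
  rw [smul_smul, ← pow_add, Nat.add_sub_cancel' hkl]

@[simp]
theorem piPow_zero : piPow C π m M 0 = ⊤ :=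
  eq_top_iff.mpr fun x _ => ⟨x, by rw [piSmul, LinearMap.lsmul_apply, pow_zero, one_smul]⟩

theorem span_pow_smul_top (k : ℕ) :
    (Ideal.span {p ^ k} : Ideal R) • (⊤ : Submodule R M) = piPow C π m M k := by
  ext x
  simp [Submodule.ideal_span_singleton_smul, Submodule.mem_smul_pointwise_iff_exists,
    mem_piPow]

theorem mem_ker_inducedMap {k : ℕ} {x : M} :
    x ∈ LinearMap.ker (inducedMap C π m M k) ↔ p ^ k • x ∈ piPow C π m M (k + 1) :=
  Submodule.Quotient.mk_eq_zero _

theorem surjective_inducedMap (k : ℕ) : Function.Surjective (inducedMap C π m M k) :=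
  (Submodule.mkQ_surjective _).comp (LinearMap.surjective_rangeRestrict _)

theorem piPow_one_le_ker_inducedMap (k : ℕ) :
    piPow C π m M 1 ≤ LinearMap.ker (inducedMap C π m M k) := by
  rintro _ ⟨y, rfl⟩
  rw [mem_ker_inducedMap]
  change p ^ k • p ^ 1 • y ∈ _
  rw [smul_smul, ← pow_add]
  exact pow_smul_mem_piPow _ _

theorem ker_inducedMap_le_of_forall_ker_piSmul_le
    (h : ∀ n ≤ m, LinearMap.ker (piSmul C π m M n) ≤ piPow C π m M (m - n))
    {k : ℕ} (hk : k < m) : LinearMap.ker (inducedMap C π m M k) ≤ piPow C π m M 1 := by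
  intro x hx
  obtain ⟨y, hy⟩ := mem_piPow.mp (mem_ker_inducedMap.mp hx)
  have hxy : x - p • y ∈ LinearMap.ker (piSmul C π m M k) := by
    change p ^ k • (x - p • y) = 0
    rw [smul_sub, smul_smul, ← pow_succ, hy, sub_self]
  have := piPow_antitone (by omega : 1 ≤ m - k) (h k hk.le hxy)
  simpa using Submodule.add_mem _ this (pow_smul_mem_piPow 1 y)

theorem ker_piSmul_le_of_forall_ker_inducedMap_le
    (h : ∀ k, 1 ≤ k → k < m → LinearMap.ker (inducedMap C π m M k) ≤ piPow C π m M 1)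
    {n : ℕ} (hn : n ≤ m) : LinearMap.ker (piSmul C π m M n) ≤ piPow C π m M (m - n) := by
  induction hn using Nat.decreasingInduction with
  | self => simp
  | of_succ n hnm ih =>
    intro x hx
    change p ^ n • x = 0 at hx
    rcases Nat.eq_zero_or_pos n with rfl | hn
    · rw [pow_zero, one_smul] at hx
      simp [hx]
    obtain ⟨y, rfl⟩ := h n hn hnm (mem_ker_inducedMap.mpr (by rw [hx]; exact zero_mem _))
    have hy : y ∈ LinearMap.ker (piSmul C π m M (n + 1)) := by
      change p ^ n • p ^ 1 • y = 0 at hx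
      change p ^ (n + 1) • y = 0
      rwa [pow_one, ← mul_smul, ← pow_succ] at hx
    obtain ⟨z, rfl⟩ := ih hy
    change p ^ 1 • p ^ (m - (n + 1)) • z ∈ _
    rw [smul_smul, ← pow_add, show 1 + (m - (n + 1)) = m - n by omega]
    exact pow_smul_mem_piPow _ _

end Basic

section DVR

variable {C : Type*} [CommRing C] [IsDomain C] {π : C} {m : ℕ}

local notation "R" => C ⧸ Ideal.span {π ^ m}
local notation "p" => Ideal.Quotient.mk (Ideal.span {π ^ m}) π

theorem torsionOf_mk_pow (hπ : π ≠ 0) {n : ℕ} (hn : n ≤ m) :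
    Ideal.torsionOf R R (p ^ n) = Ideal.span {p ^ (m - n)} := by
  ext r
  obtain ⟨s, rfl⟩ := Ideal.Quotient.mk_surjective r
  have hspan : (Ideal.span {p ^ (m - n)} : Ideal R) =
      (Ideal.span {π ^ (m - n)}).map (Ideal.Quotient.mk _) := by
    rw [Ideal.map_span, Set.image_singleton, map_pow]
  have hm : π ^ m = π ^ (m - n) * π ^ n := by rw [← pow_add, Nat.sub_add_cancel hn]
  rw [hspan, Ideal.mem_quotient_iff_mem (Ideal.span_singleton_le_span_singleton.mpr
      (pow_dvd_pow π (Nat.sub_le m n))), Ideal.mem_torsionOf_iff, smul_eq_mul, ← map_pow,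
    ← map_mul, Ideal.Quotient.eq_zero_iff_mem, Ideal.mem_span_singleton, Ideal.mem_span_singleton,
    hm, mul_dvd_mul_iff_right (pow_ne_zero n hπ)]

theorem exists_eq_span_mk_pow [IsDiscreteValuationRing C] (hπ : Irreducible π) (J : Ideal R) :
    ∃ n ≤ m, J = Ideal.span {p ^ n} := by
  have hπm : π ^ m ∈ J.comap (Ideal.Quotient.mk _) := by
    simp [Ideal.Quotient.eq_zero_iff_mem.mpr (Ideal.mem_span_singleton_self _)]
  obtain ⟨n, hn⟩ := IsDiscreteValuationRing.ideal_eq_span_pow_irreducible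
    ((Submodule.ne_bot_iff _).mpr ⟨_, hπm, pow_ne_zero m hπ.ne_zero⟩) hπ
  refine ⟨n, ?_, ?_⟩
  · rwa [hn, Ideal.mem_span_singleton, pow_dvd_pow_iff hπ.ne_zero hπ.not_isUnit] at hπm
  · rw [← Ideal.map_comap_of_surjective _ Ideal.Quotient.mk_surjective J, hn, Ideal.map_span,
      Set.image_singleton, map_pow]

variable {M : Type*} [AddCommGroup M] [Module (C ⧸ Ideal.span {π ^ m}) M]

theorem flat_iff_forall_ker_piSmul_le [IsDiscreteValuationRing C] (hπ : Irreducible π) :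
    Module.Flat R M ↔ ∀ n ≤ m, LinearMap.ker (piSmul C π m M n) ≤ piPow C π m M (m - n) := by
  rw [Module.Flat.iff_lift_lsmul_comp_subtype_injective]
  constructor
  · intro h n hn
    have := (injective_lift_lsmul_comp_span_singleton_iff (M := M) (p ^ n)).mp
      (h (Submodule.fg_span_singleton _))
    rwa [torsionOf_mk_pow hπ.ne_zero hn, span_pow_smul_top] at this
  · rintro h J -
    obtain ⟨n, hn, rfl⟩ := exists_eq_span_mk_pow hπ J
    rw [injective_lift_lsmul_comp_span_singleton_iff, torsionOf_mk_pow hπ.ne_zero hn,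
      span_pow_smul_top]
    exact h n hn

end DVR

theorem statement7_general (C : Type*) [CommRing C] [IsDomain C] [IsDiscreteValuationRing C]
    (π : C) (hπ : Irreducible π) (m : ℕ)
    (M : Type*) [AddCommGroup M] [Module (C ⧸ Ideal.span {π ^ m}) M] :
    Module.Flat (C ⧸ Ideal.span {π ^ m}) M ↔
      ∀ k : ℕ, 1 ≤ k → k ≤ m - 1 →
        Function.Surjective (inducedMap C π m M k) ∧
        LinearMap.ker (inducedMap C π m M k) = piPow C π m M 1 := by
  rw [flat_iff_forall_ker_piSmul_le hπ]
  refine ⟨fun h k hk₁ hk₂ => ⟨surjective_inducedMap k, ?_⟩, fun h n hn => ?_⟩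
  · exact le_antisymm (ker_inducedMap_le_of_forall_ker_piSmul_le h (by omega))
      (piPow_one_le_ker_inducedMap k)
  · exact ker_piSmul_le_of_forall_ker_inducedMap_le
      (fun k hk₁ hk₂ => (h k hk₁ (by omega)).2.le) hn

/-- A module `M` over `C/(π^m)` (`C` a DVR with uniformizer `π`, `m ≥ 1`) is flat iff for
every `1 ≤ k ≤ m-1` the map `x ↦ π^k • x` induces an isomorphism
`M/πM ≅ π^k M / π^{k+1} M`, i.e. `M → π^k M / π^{k+1} M` is surjective with kernel `πM`. -/
theorem statement7 (C : Type*) [CommRing C] [IsDomain C] [IsDiscreteValuationRing C]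
    (π : C) (hπ : Irreducible π) (m : ℕ) (hm : 1 ≤ m)
    (M : Type*) [AddCommGroup M] [Module (C ⧸ Ideal.span {π ^ m}) M] :
    Module.Flat (C ⧸ Ideal.span {π ^ m}) M ↔
      ∀ k : ℕ, 1 ≤ k → k ≤ m - 1 →
        Function.Surjective (inducedMap C π m M k) ∧
        LinearMap.ker (inducedMap C π m M k) = piPow C π m M 1 :=
  statement7_general C π hπ m M

end DVRFlatNL
end
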